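/- arXiv:2301.07212 — 3 statements merged into one kernel-verified Lean document; each statement's English description precedes it below -/
import Mathlib

section
/- Fix $\rho \in \mathbb{C}$ with $\rho \neq 0$, and real numbers $N_1, N_2 \geq 0$ and $A \in \mathbb{C}$ with $|A| \leq N_1 N_2$. For $\alpha, \beta \in \mathbb{C}$ define $I_n = |\alpha|^2 |\rho|^{2n} N_1^2 + 2\,\mathrm{Re}(\bar\alpha \beta (\bar\rho/\rho)^n A) + |\beta|^2 |\rho|^{-2n} N_2^2$ for $n \in \mathbb{Z}$. If $\alpha \neq 0$, $\beta \neq 0$, and $I_n = I_{n+1} = 0$ for some $n$, then either $N_1 = N_2 = 0$, or ($|\rho| = 1$ and $\rho^2 = 1$). -/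
/-!
Write `a = ‖α‖ N₁`, `b = ‖β‖ N₂`, `r = ‖ρ‖`, `γ = conj ρ / ρ` and `z_m = conj α β γ^m A` for the
cross term. Since `‖γ‖ = 1`, `‖z_m‖ ≤ a b`, so `I_m ≥ (a r^m - b r^(-m))^2`; hence `I_m = 0` forces
`a r^m = b r^(-m)` and `z_m = -a b`. For two consecutive indices the first equation gives `a = b = 0`
or `r^2 = 1`; in the latter case `z_(n+1) = z_n γ` with `z_n = z_(n+1) = -a b ≠ 0` gives `γ = 1`,
so `ρ` is real of modulus one.
-/

open Complex ComplexConjugate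

namespace Complex

theorem eq_neg_ofReal_of_re_eq_neg_of_norm_le {z : ℂ} {c : ℝ} (hre : z.re = -c) (hz : ‖z‖ ≤ c) :
    z = -(c : ℂ) := by
  have him : z.im = 0 := abs_re_eq_norm.1 <|
    (abs_re_le_norm z).antisymm (by rw [hre, abs_neg]; exact hz.trans (le_abs_self c))
  apply Complex.ext <;> simp [hre, him]

theorem eq_and_eq_neg_ofReal_mul_of_sq_add_two_re_add_sq_eq_zero {x y : ℝ} {z : ℂ}
    (hz : ‖z‖ ≤ x * y) (h : x ^ 2 + 2 * z.re + y ^ 2 = 0) : x = y ∧ z = -((x * y : ℝ) : ℂ) := by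
  have hre : -(x * y) ≤ z.re := by linarith [neg_abs_le z.re, abs_re_le_norm z]
  have hxy : x = y := by
    have : (x - y) ^ 2 = 0 := le_antisymm (by nlinarith) (sq_nonneg _)
    linarith [pow_eq_zero_iff two_ne_zero |>.1 this]
  subst hxy
  exact ⟨rfl, eq_neg_ofReal_of_re_eq_neg_of_norm_le (by linarith) hz⟩

theorem sq_eq_norm_sq_of_conj_eq {z : ℂ} (h : conj z = z) : z ^ 2 = (‖z‖ : ℂ) ^ 2 := by
  rw [← mul_conj', h, sq]

end Complex

theorem eq_zero_iff_of_mul_zpow_eq_mul_zpow_neg {r a b : ℝ} (hr : 0 < r) {m : ℤ}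
    (h : a * r ^ m = b * r ^ (-m)) : a = 0 ↔ b = 0 := by
  constructor <;> intro h0 <;> simpa [h0, (zpow_pos hr _).ne'] using h

theorem eq_one_of_mul_zpow_eq_mul_zpow_neg_of_succ {r a b : ℝ} (hr : 0 < r) (hb : b ≠ 0) {n : ℤ}
    (h : a * r ^ n = b * r ^ (-n)) (h' : a * r ^ (n + 1) = b * r ^ (-(n + 1))) : r = 1 := by
  have hr_inv : r = r⁻¹ := by
    refine mul_left_cancel₀ (mul_ne_zero hb (zpow_ne_zero (-n) hr.ne')) ?_
    calc b * r ^ (-n) * r = a * r ^ (n + 1) := by rw [zpow_add_one₀ hr.ne', ← h, mul_assoc]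
      _ = b * r ^ (-n) * r⁻¹ := by rw [h', neg_add, zpow_add₀ hr.ne', zpow_neg_one, mul_assoc]
  have : r * r = 1 := by nth_rewrite 2 [hr_inv]; exact mul_inv_cancel₀ hr.ne'
  nlinarith

theorem amplitudes_eq_and_cross_term_eq_neg_of_eq_zero {ρ : ℂ} (hρ : ρ ≠ 0) {N₁ N₂ : ℝ} {A : ℂ}
    (hA : ‖A‖ ≤ N₁ * N₂) (α β : ℂ) (m : ℤ)
    (h : ‖α‖ ^ 2 * ‖ρ‖ ^ (2 * m) * N₁ ^ 2 + 2 * (conj α * β * (conj ρ / ρ) ^ m * A).re +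
      ‖β‖ ^ 2 * ‖ρ‖ ^ (-(2 * m)) * N₂ ^ 2 = 0) :
    ‖α‖ * N₁ * ‖ρ‖ ^ m = ‖β‖ * N₂ * ‖ρ‖ ^ (-m) ∧
      conj α * β * (conj ρ / ρ) ^ m * A = -((‖α‖ * N₁ * (‖β‖ * N₂) : ℝ) : ℂ) := by
  have hr : ‖ρ‖ ≠ 0 := norm_ne_zero_iff.2 hρ
  have hr_cancel : ‖ρ‖ ^ m * ‖ρ‖ ^ (-m) = 1 := by rw [← zpow_add₀ hr, add_neg_cancel, zpow_zero]
  have hγ : ‖conj ρ / ρ‖ = 1 := by rw [norm_div, norm_conj, div_self hr]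
  have hz : ‖conj α * β * (conj ρ / ρ) ^ m * A‖ ≤
      (‖α‖ * N₁ * ‖ρ‖ ^ m) * (‖β‖ * N₂ * ‖ρ‖ ^ (-m)) := calc
    _ = ‖α‖ * ‖β‖ * ‖A‖ := by simp only [norm_mul, norm_zpow, hγ, norm_conj, one_zpow, mul_one]
    _ ≤ ‖α‖ * ‖β‖ * (N₁ * N₂) := by gcongr
    _ = _ := by linear_combination (-(‖α‖ * N₁ * (‖β‖ * N₂))) * hr_cancel
  have h_sq : (‖α‖ * N₁ * ‖ρ‖ ^ m) ^ 2 + 2 * (conj α * β * (conj ρ / ρ) ^ m * A).re +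
      (‖β‖ * N₂ * ‖ρ‖ ^ (-m)) ^ 2 = 0 := by
    rw [← h, mul_comm 2 m, ← neg_mul, zpow_mul, zpow_mul, zpow_two, zpow_two]
    ring
  obtain ⟨hxy, hz⟩ := eq_and_eq_neg_ofReal_mul_of_sq_add_two_re_add_sq_eq_zero hz h_sq
  refine ⟨hxy, hz.trans ?_⟩
  congr 2
  linear_combination (‖α‖ * N₁ * (‖β‖ * N₂)) * hr_cancel
theorem consecutive_zero_periods_general (ρ : ℂ) (hρ : ρ ≠ 0)
    (N₁ N₂ : ℝ)
    (A : ℂ) (hA : ‖A‖ ≤ N₁ * N₂)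
    (α β : ℂ) (hα : α ≠ 0) (hβ : β ≠ 0)
    (I : ℤ → ℝ)
    (hI : ∀ n : ℤ, I n =
      (‖α‖) ^ 2 * (‖ρ‖) ^ (2 * n) * N₁ ^ 2 +
        2 * (starRingEnd ℂ α * β * ((starRingEnd ℂ ρ) / ρ) ^ n * A).re +
        (‖β‖) ^ 2 * (‖ρ‖) ^ (-(2 * n)) * N₂ ^ 2)
    (n : ℤ) (hn : I n = 0) (hn1 : I (n + 1) = 0) :
    (N₁ = 0 ∧ N₂ = 0) ∨ (‖ρ‖ = 1 ∧ ρ ^ 2 = 1) := by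
  have hr : 0 < ‖ρ‖ := norm_pos_iff.2 hρ
  obtain ⟨hx, hz⟩ := amplitudes_eq_and_cross_term_eq_neg_of_eq_zero hρ hA α β n
    ((hI n).symm.trans hn)
  obtain ⟨hx', hz'⟩ := amplitudes_eq_and_cross_term_eq_neg_of_eq_zero hρ hA α β (n + 1)
    ((hI (n + 1)).symm.trans hn1)
  have hab := eq_zero_iff_of_mul_zpow_eq_mul_zpow_neg hr hx
  rcases eq_or_ne (‖α‖ * N₁) 0 with ha | ha
  · exact Or.inl ⟨(mul_eq_zero.1 ha).resolve_left (norm_ne_zero_iff.2 hα),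
      (mul_eq_zero.1 (hab.1 ha)).resolve_left (norm_ne_zero_iff.2 hβ)⟩
  have hb : ‖β‖ * N₂ ≠ 0 := mt hab.2 ha
  have hr1 : ‖ρ‖ = 1 := eq_one_of_mul_zpow_eq_mul_zpow_neg_of_succ hr hb hx hx'
  have hγ : conj ρ / ρ = 1 := by
    refine mul_left_cancel₀ (neg_ne_zero.2 (ofReal_ne_zero.2 (mul_ne_zero ha hb))) ?_
    calc _ = conj α * β * (conj ρ / ρ) ^ n * A * (conj ρ / ρ) := by rw [hz]
      _ = conj α * β * (conj ρ / ρ) ^ (n + 1) * A := by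
        rw [zpow_add_one₀ (by simpa using hρ)]; ring
      _ = _ := by rw [hz', mul_one]
  refine Or.inr ⟨hr1, ?_⟩
  rw [sq_eq_norm_sq_of_conj_eq ((div_eq_one_iff_eq hρ).1 hγ), hr1]
  norm_num

/-- Algebraic core of the "two consecutive vanishing periods" lemma for
`u = α ψ₁ + β ψ₂` with Floquet multipliers `ρ` and `1/ρ`. -/
theorem consecutive_zero_periods (ρ : ℂ) (hρ : ρ ≠ 0)
    (N₁ N₂ : ℝ) (hN₁ : 0 ≤ N₁) (hN₂ : 0 ≤ N₂)
    (A : ℂ) (hA : ‖A‖ ≤ N₁ * N₂)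
    (α β : ℂ) (hα : α ≠ 0) (hβ : β ≠ 0)
    (I : ℤ → ℝ)
    (hI : ∀ n : ℤ, I n =
      (‖α‖) ^ 2 * (‖ρ‖) ^ (2 * n) * N₁ ^ 2 +
        2 * (starRingEnd ℂ α * β * ((starRingEnd ℂ ρ) / ρ) ^ n * A).re +
        (‖β‖) ^ 2 * (‖ρ‖) ^ (-(2 * n)) * N₂ ^ 2)
    (n : ℤ) (hn : I n = 0) (hn1 : I (n + 1) = 0) :
    (N₁ = 0 ∧ N₂ = 0) ∨ (‖ρ‖ = 1 ∧ ρ ^ 2 = 1) :=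
  consecutive_zero_periods_general ρ hρ N₁ N₂ A hA α β hα hβ I hI n hn hn1
end

section
/- Let $M, T$ be real $2\times 2$ matrices with $\det M = 1$, $T$ symmetric positive semi-definite, $r \neq 0$ real, $J = r\begin{pmatrix}0 & -1\\ 1& 0\end{pmatrix}$, and set $D = \mathrm{tr}\,M$, $\dot D = \mathrm{tr}(M J^{-1} T)$, $a = (M_{11}-M_{22},\, 2M_{21})^\top$, $b = (-2M_{12},\, M_{11}-M_{22})^\top$. Then $4r M_{21} \dot D = -T_{11}(D^2-4) + a^\top T a$ and $4r M_{12} \dot D = T_{22}(D^2-4) - b^\top T b$. Consequently, if $D^2 < 4$ and $T \neq 0$ (so $T_{11} > 0$ or $T_{22} > 0$), then $\dot D \neq 0$. -/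
open Matrix

/-!
Write `S = !![0, 1; -1, 0]`, so that `J⁻¹ = r⁻¹ • S` and `r Ḋ = tr (M S T)`. Both identities are then
polynomial identities in the entries of `M` and `T`, valid modulo `det M = 1` once `T` is symmetric.
If `D² < 4` and `Ḋ = 0`, they force `T₁₁ (4 - D²) = -aᵀ T a ≤ 0` and `T₂₂ (4 - D²) = -bᵀ T b ≤ 0`,
so the trace of the positive semi-definite matrix `T` vanishes, whence `T = 0`.
-/

lemma Matrix.inv_smul_rot {K : Type*} [Field K] {r : K} (hr : r ≠ 0) :
    (r • !![0, -1; 1, 0])⁻¹ = r⁻¹ • !![(0 : K), 1; -1, 0] := by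
  refine inv_eq_right_inv ?_
  rw [Matrix.smul_mul, Matrix.mul_smul, smul_smul, mul_inv_cancel₀ hr, one_smul, one_fin_two]
  simp

section CommRing

variable {R : Type*} [CommRing R] {M T : Matrix (Fin 2) (Fin 2) R}

lemma Matrix.IsSymm.dotProduct_mulVec_fin_two (hT : T.IsSymm) (v : Fin 2 → R) :
    v ⬝ᵥ T *ᵥ v = v 0 ^ 2 * T 0 0 + 2 * v 0 * v 1 * T 1 0 + v 1 ^ 2 * T 1 1 := by
  simp only [dotProduct, mulVec, Fin.sum_univ_two, hT.apply 0 1]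
  ring

lemma Matrix.trace_mul_rot_mul (M T : Matrix (Fin 2) (Fin 2) R) :
    (M * !![0, 1; -1, 0] * T).trace =
      M 0 0 * T 1 0 - M 1 1 * T 0 1 - M 0 1 * T 0 0 + M 1 0 * T 1 1 := by
  simp only [trace_fin_two, mul_apply, of_apply, cons_val', cons_val_fin_one, Fin.sum_univ_two,
    cons_val_zero, cons_val_one]
  ring

lemma Matrix.four_mul_apply_one_zero_mul_trace_mul_rot_mul (hM : M.det = 1) (hT : T.IsSymm) :
    4 * M 1 0 * (M * !![0, 1; -1, 0] * T).trace =
      -T 0 0 * (M.trace ^ 2 - 4) +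
        ![M 0 0 - M 1 1, 2 * M 1 0] ⬝ᵥ T *ᵥ ![M 0 0 - M 1 1, 2 * M 1 0] := by
  rw [det_fin_two] at hM
  rw [hT.dotProduct_mulVec_fin_two, trace_mul_rot_mul, trace_fin_two, hT.apply 0 1]
  simp only [cons_val_zero, cons_val_one]
  linear_combination 4 * T 0 0 * hM

lemma Matrix.four_mul_apply_zero_one_mul_trace_mul_rot_mul (hM : M.det = 1) (hT : T.IsSymm) :
    4 * M 0 1 * (M * !![0, 1; -1, 0] * T).trace =
      T 1 1 * (M.trace ^ 2 - 4) -
        ![-2 * M 0 1, M 0 0 - M 1 1] ⬝ᵥ T *ᵥ ![-2 * M 0 1, M 0 0 - M 1 1] := by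
  rw [det_fin_two] at hM
  rw [hT.dotProduct_mulVec_fin_two, trace_mul_rot_mul, trace_fin_two, hT.apply 0 1]
  simp only [cons_val_zero, cons_val_one]
  linear_combination -4 * T 1 1 * hM

end CommRing

lemma Matrix.PosSemidef.exists_diag_pos_of_ne_zero {n : Type*} [Fintype n]
    {T : Matrix n n ℝ} (hT : T.PosSemidef) (h : T ≠ 0) : ∃ i, 0 < T i i := by
  by_contra! hle
  exact h <| hT.trace_eq_zero_iff.mp <|
    Finset.sum_eq_zero fun i _ ↦ le_antisymm (hle i) hT.diag_nonneg

/-- The derivative identities for the Floquet discriminant: with `det M = 1`,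
`T` symmetric positive semi-definite, `J = r [[0,-1],[1,0]]`, `D = tr M` and
`Ḋ = tr(M J⁻¹ T)`, one has
`4 r M₂₁ Ḋ = -T₁₁ (D²-4) + aᵀ T a` and `4 r M₁₂ Ḋ = T₂₂ (D²-4) - bᵀ T b`,
and consequently `Ḋ ≠ 0` whenever `D² < 4` and `T ≠ 0`. -/
theorem discriminant_derivative_identities (r : ℝ) (hr : r ≠ 0)
    (M T : Matrix (Fin 2) (Fin 2) ℝ) (hdet : M.det = 1)
    (hT : T.PosSemidef) :
    let J : Matrix (Fin 2) (Fin 2) ℝ := r • !![0, -1; 1, 0]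
    let D : ℝ := M.trace
    let Ddot : ℝ := (M * J⁻¹ * T).trace
    let a : Fin 2 → ℝ := ![M 0 0 - M 1 1, 2 * M 1 0]
    let b : Fin 2 → ℝ := ![-2 * M 0 1, M 0 0 - M 1 1]
    (4 * r * M 1 0 * Ddot = -(T 0 0) * (D ^ 2 - 4) + dotProduct a (T.mulVec a)) ∧
    (4 * r * M 0 1 * Ddot = T 1 1 * (D ^ 2 - 4) - dotProduct b (T.mulVec b)) ∧
    (D ^ 2 < 4 → T ≠ 0 → Ddot ≠ 0) := by
  intro J D Ddot a b
  have hsymm : T.IsSymm := isHermitian_iff_isSymm.mp hT.isHermitian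
  have hrDdot : r * Ddot = (M * !![0, 1; -1, 0] * T).trace := by
    simp only [Ddot, J]
    rw [inv_smul_rot hr, Matrix.mul_smul, Matrix.smul_mul, trace_smul, smul_eq_mul,
      mul_inv_cancel_left₀ hr]
  have h₁ : 4 * r * M 1 0 * Ddot = -(T 0 0) * (D ^ 2 - 4) + a ⬝ᵥ T *ᵥ a := by
    rw [← four_mul_apply_one_zero_mul_trace_mul_rot_mul hdet hsymm, ← hrDdot]
    ring
  have h₂ : 4 * r * M 0 1 * Ddot = T 1 1 * (D ^ 2 - 4) - b ⬝ᵥ T *ᵥ b := by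
    rw [← four_mul_apply_zero_one_mul_trace_mul_rot_mul hdet hsymm, ← hrDdot]
    ring
  refine ⟨h₁, h₂, fun hD hT0 hDdot ↦ ?_⟩
  have ha : 0 ≤ a ⬝ᵥ T *ᵥ a := by simpa using hT.dotProduct_mulVec_nonneg a
  have hb : 0 ≤ b ⬝ᵥ T *ᵥ b := by simpa using hT.dotProduct_mulVec_nonneg b
  rw [hDdot, mul_zero] at h₁ h₂
  rcases Fin.exists_fin_two.mp (hT.exists_diag_pos_of_ne_zero hT0) with h | h
  · nlinarith
  · nlinarith
end

section
/- Let $q = \begin{pmatrix} a & b \\ b & d\end{pmatrix}\mu$ and $w = I\mu$ where $\mu = \sum_{k\in\mathbb{Z}} \delta_k$, $a,b,d \in \mathbb{R}$ with $(a-d)^2 + 4b^2 < 16$. Then the Floquet discriminant of the system $Ju' + qu = \lambda w u$ (with $J = \begin{pmatrix}0&-1\\1&0\end{pmatrix}$, period $\omega=1$) is $D(\lambda) = \frac{16}{\lambda^2 - (a+d)\lambda + ad - b^2 + 4} - 2$ for real $\lambda$; the denominator is positive for all real $\lambda$, $D(\lambda) > -2$ for all $\lambda \in \mathbb{R}$,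 $D(\lambda) \to -2$ as $\lambda \to \pm\infty$, and $D$ attains its maximum at $\lambda = (a+d)/2$ with maximum value $\geq 2$, with equality exactly when $a = d$ and $b = 0$. -/
open Matrix Filter Topology

/-!
For a symmetric `2 × 2` matrix `X` one has `det (J + X) = 1 + det X` and
`tr (adj (J + X) (J - X)) = 2 (1 - det X)`, so the trace of the jump matrix `(J + X)⁻¹ (J - X)`
is `4 / (1 + det X) - 2`. For `X = ½(Δq - λ)`, completing the square gives
`4 (1 + det X) = (λ - (a + d)/2)² + c` with `c = 4 - ((a - d)² + 4b²)/4 > 0`. Everything else is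
the shape of `16 / ((λ - m)² + c) - 2`: its peak value `16 / c - 2` is at least `2` because
`c ≤ 4`, with equality iff the discriminant `(a - d)² + 4b²` of `Δq` vanishes.
-/

theorem Matrix.isSymm_fin_two_iff {R : Type*} {X : Matrix (Fin 2) (Fin 2) R} :
    X.IsSymm ↔ ∃ p q r, X = !![p, q; q, r] := by
  refine ⟨fun hX => ⟨X 0 0, X 0 1, X 1 1, X.eta_fin_two.trans (by rw [hX.apply 0 1])⟩, ?_⟩
  rintro ⟨p, q, r, rfl⟩
  exact IsSymm.ext fun i j => by fin_cases i <;> fin_cases j <;> rfl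

section CayleyTransform

variable {R : Type*} [CommRing R] {X : Matrix (Fin 2) (Fin 2) R}

theorem det_J_add_of_isSymm (hX : X.IsSymm) : (!![0, -1; 1, 0] + X).det = 1 + X.det := by
  obtain ⟨p, q, r, rfl⟩ := isSymm_fin_two_iff.mp hX
  simp only [of_add_of, cons_add_cons, empty_add_empty, det_fin_two_of]
  ring

theorem trace_adjugate_J_add_mul_J_sub_of_isSymm (hX : X.IsSymm) :
    (adjugate (!![0, -1; 1, 0] + X) * (!![0, -1; 1, 0] - X)).trace = 2 * (1 - X.det) := by
  obtain ⟨p, q, r, rfl⟩ := isSymm_fin_two_iff.mp hX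
  simp only [of_add_of, of_sub_of, cons_add_cons, cons_sub_cons, empty_add_empty,
    empty_sub_empty, adjugate_fin_two_of, mul_fin_two, trace_fin_two_of, det_fin_two_of]
  ring

end CayleyTransform

theorem trace_inv_J_add_mul_J_sub_of_isSymm {K : Type*} [Field K]
    {X : Matrix (Fin 2) (Fin 2) K} (hX : X.IsSymm) (hdet : 1 + X.det ≠ 0) :
    ((!![0, -1; 1, 0] + X)⁻¹ * (!![0, -1; 1, 0] - X)).trace = 4 / (1 + X.det) - 2 := by
  rw [inv_def, det_J_add_of_isSymm hX, Ring.inverse_eq_inv', smul_mul, trace_smul, smul_eq_mul,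
    trace_adjugate_J_add_mul_J_sub_of_isSymm hX]
  field_simp
  ring

theorem one_add_det_half_smul_sub_smul_one (a b d lam : ℝ) :
    1 + ((2⁻¹ : ℝ) • (!![a, b; b, d] - lam • (1 : Matrix (Fin 2) (Fin 2) ℝ))).det =
      ((lam - (a + d) / 2) ^ 2 + (4 - ((a - d) ^ 2 + 4 * b ^ 2) / 4)) / 4 := by
  simp only [one_fin_two, smul_of, of_sub_of, smul_cons, smul_empty, cons_sub_cons,
    empty_sub_empty, smul_eq_mul, det_fin_two_of]
  ring

theorem trace_jump_matrix_eq (a b d lam : ℝ) (hcond : (a - d) ^ 2 + 4 * b ^ 2 < 16) :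
    let X := (2⁻¹ : ℝ) • (!![a, b; b, d] - lam • (1 : Matrix (Fin 2) (Fin 2) ℝ))
    ((!![0, -1; 1, 0] + X)⁻¹ * (!![0, -1; 1, 0] - X)).trace =
      16 / ((lam - (a + d) / 2) ^ 2 + (4 - ((a - d) ^ 2 + 4 * b ^ 2) / 4)) - 2 := by
  intro X
  have hX : X.IsSymm :=
    ((isSymm_fin_two_iff.mpr ⟨a, b, d, rfl⟩).sub (isSymm_one.smul lam)).smul _
  have hpos : 0 < (lam - (a + d) / 2) ^ 2 + (4 - ((a - d) ^ 2 + 4 * b ^ 2) / 4) := by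
    linarith [sq_nonneg (lam - (a + d) / 2)]
  have hdet := one_add_det_half_smul_sub_smul_one a b d lam
  rw [trace_inv_J_add_mul_J_sub_of_isSymm hX (hdet ▸ (div_pos hpos four_pos).ne'), hdet]
  field_simp
  ring

theorem sq_sub_add_four_mul_sq_eq_zero_iff {a b d : ℝ} :
    (a - d) ^ 2 + 4 * b ^ 2 = 0 ↔ a = d ∧ b = 0 := by
  rw [show (a - d) ^ 2 + 4 * b ^ 2 = (a - d) * (a - d) + (2 * b) * (2 * b) by ring,
    mul_self_add_mul_self_eq_zero, sub_eq_zero, mul_eq_zero]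
  norm_num

theorem tendsto_sq_sub_add_const_cocompact (m c : ℝ) :
    Tendsto (fun x : ℝ => (x - m) ^ 2 + c) (cocompact ℝ) atTop := by
  refine tendsto_atTop_add_const_right _ c ?_
  simpa [Function.comp_def] using (tendsto_pow_atTop two_ne_zero).comp
    (tendsto_norm_cocompact_atTop.comp (Homeomorph.subRight m).isClosedEmbedding.tendsto_cocompact)

/-- Explicit Floquet discriminant for the system `Ju' + qu = λwu` with
`q = [[a,b],[b,d]] μ`, `w = I μ`, `μ = ∑_{k∈ℤ} δ_k`, period `ω = 1`, and
`(a-d)² + 4b² < 16`.  Between integers solutions are constant, so the monodromy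
matrix over one period is the jump matrix
`M(λ) = (J + ½(Δq - λΔw))⁻¹ (J - ½(Δq - λΔw))` with `Δq = [[a,b],[b,d]]`, `Δw = I`. -/
theorem discrete_example_discriminant (a b d : ℝ)
    (hcond : (a - d) ^ 2 + 4 * b ^ 2 < 16) :
    let J : Matrix (Fin 2) (Fin 2) ℝ := !![0, -1; 1, 0]
    let Δq : Matrix (Fin 2) (Fin 2) ℝ := !![a, b; b, d]
    let M : ℝ → Matrix (Fin 2) (Fin 2) ℝ := fun lam =>
      (J + (2⁻¹ : ℝ) • (Δq - lam • (1 : Matrix (Fin 2) (Fin 2) ℝ)))⁻¹ *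
        (J - (2⁻¹ : ℝ) • (Δq - lam • (1 : Matrix (Fin 2) (Fin 2) ℝ)))
    let D : ℝ → ℝ := fun lam => (M lam).trace
    (∀ lam : ℝ, 0 < lam ^ 2 - (a + d) * lam + (a * d - b ^ 2 + 4)) ∧
    (∀ lam : ℝ, D lam = 16 / (lam ^ 2 - (a + d) * lam + (a * d - b ^ 2 + 4)) - 2) ∧
    (∀ lam : ℝ, -2 < D lam) ∧
    Tendsto D atTop (nhds (-2)) ∧ Tendsto D atBot (nhds (-2)) ∧
    (∀ lam : ℝ, D lam ≤ D ((a + d) / 2)) ∧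
    2 ≤ D ((a + d) / 2) ∧
    (D ((a + d) / 2) = 2 ↔ a = d ∧ b = 0) := by
  intro J Δq M D
  set m := (a + d) / 2
  set c := 4 - ((a - d) ^ 2 + 4 * b ^ 2) / 4 with hc_def
  have hc : 0 < c := by linarith
  have hP (lam : ℝ) : lam ^ 2 - (a + d) * lam + (a * d - b ^ 2 + 4) = (lam - m) ^ 2 + c := by
    ring
  have hD : D = fun lam => 16 / ((lam - m) ^ 2 + c) - 2 :=
    funext fun lam => trace_jump_matrix_eq a b d lam hcond
  have hlim : Tendsto D (cocompact ℝ) (𝓝 (-2)) := by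
    simpa [hD] using ((tendsto_sq_sub_add_const_cocompact m c).const_div_atTop 16).sub_const 2
  refine ⟨fun lam => hP lam ▸ by positivity, fun lam => by rw [hD, hP],
    fun lam => ?_, hlim.mono_left atTop_le_cocompact, hlim.mono_left atBot_le_cocompact,
    fun lam => ?_, ?_, ?_⟩ <;>
    simp only [hD, sub_self, zero_pow two_ne_zero, zero_add]
  · have : 0 < 16 / ((lam - m) ^ 2 + c) := by positivity
    linarith
  · exact sub_le_sub_right
      (div_le_div_of_nonneg_left (by norm_num) hc (le_add_of_nonneg_left (sq_nonneg _))) 2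
  · rw [le_sub_iff_add_le, le_div_iff₀ hc, hc_def]
    linarith [sq_nonneg (a - d), sq_nonneg b]
  · calc 16 / c - 2 = 2 ↔ (a - d) ^ 2 + 4 * b ^ 2 = 0 := by
          rw [sub_eq_iff_eq_add, div_eq_iff hc.ne', hc_def]
          constructor <;> intro <;> linarith
      _ ↔ a = d ∧ b = 0 := sq_sub_add_four_mul_sq_eq_zero_iff
end
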